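/- Fix λ ≠ 0. A continuously differentiable covector field A : ℝ⁴ → ℝ⁴ satisfies the invariance conditions L_ξA = 0 for ξ = e₁, ξ = e₃, ξ = e₂ + e₄ = (0,1,0,1) and ξ = e₁₃ + λe₂ = (x³, λ, −x¹, 0) if and only if there exist constants C₁, C₂, C₃, C₄ ∈ ℝ such that for all x: A₁(x) = C₁·sin((x²−x⁴)/λ) + C₂·cos((x²−x⁴)/λ), A₃(x) = C₁·cos((x²−x⁴)/λ) − C₂·sin((x²−x⁴)/λ), A₂(x) = C₃ and A₄(x) = C₄. (This is the class P₍₄,₄₎ for λ ≠ 0.) -/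

import Mathlib

open Real

/-- Partial derivative of a scalar function on ℝ⁴ in the j-th coordinate direction. -/
noncomputable def pd (j : Fin 4) (f : (Fin 4 → ℝ) → ℝ) (x : Fin 4 → ℝ) : ℝ :=
  fderiv ℝ f x (Pi.single j 1)

/-- The i-th component of the Lie derivative of the covector field A along
the vector field ξ at the point x:  Σ_j ξ^j ∂_j A_i + Σ_j A_j ∂_i ξ^j. -/
noncomputable def lieCov (ξ A : (Fin 4 → ℝ) → Fin 4 → ℝ) (x : Fin 4 → ℝ) (i : Fin 4) : ℝ :=
  (∑ j : Fin 4, ξ x j * pd j (fun y => A y i) x)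
    + ∑ j : Fin 4, A x j * pd i (fun y => ξ y j) x

/-- Invariance condition L_ξ A = 0 on all of ℝ⁴. -/
def PInvariant (ξ A : (Fin 4 → ℝ) → Fin 4 → ℝ) : Prop :=
  ∀ x i, lieCov ξ A x i = 0

/-- Invariance condition L_ξ A = 0 on a set M. -/
def PInvariantOn (ξ A : (Fin 4 → ℝ) → Fin 4 → ℝ) (M : Set (Fin 4 → ℝ)) : Prop :=
  ∀ x ∈ M, ∀ i, lieCov ξ A x i = 0

def e1 : (Fin 4 → ℝ) → Fin 4 → ℝ := fun _ => ![1, 0, 0, 0]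
def e2 : (Fin 4 → ℝ) → Fin 4 → ℝ := fun _ => ![0, 1, 0, 0]
def e3 : (Fin 4 → ℝ) → Fin 4 → ℝ := fun _ => ![0, 0, 1, 0]
def e4 : (Fin 4 → ℝ) → Fin 4 → ℝ := fun _ => ![0, 0, 0, 1]
def e12 : (Fin 4 → ℝ) → Fin 4 → ℝ := fun x => ![-x 1, x 0, 0, 0]
def e13 : (Fin 4 → ℝ) → Fin 4 → ℝ := fun x => ![x 2, 0, -x 0, 0]
def e23 : (Fin 4 → ℝ) → Fin 4 → ℝ := fun x => ![0, -x 2, x 1, 0]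
def e14 : (Fin 4 → ℝ) → Fin 4 → ℝ := fun x => ![x 3, 0, 0, x 0]
def e24 : (Fin 4 → ℝ) → Fin 4 → ℝ := fun x => ![0, x 3, 0, x 1]
def e34 : (Fin 4 → ℝ) → Fin 4 → ℝ := fun x => ![0, 0, x 3, x 2]

lemma pd_const (j : Fin 4) (c : ℝ) (x : Fin 4 → ℝ) : pd j (fun _ => c) x = 0 := by
  simp [pd]

lemma pd_proj (j k : Fin 4) (x : Fin 4 → ℝ) :
    pd j (fun y => y k) x = (Pi.single j 1 : Fin 4 → ℝ) k := by
  have : HasFDerivAt (fun y : Fin 4 → ℝ => y k)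
      (ContinuousLinearMap.proj k : (Fin 4 → ℝ) →L[ℝ] ℝ) x :=
    hasFDerivAt_apply (𝕜 := ℝ) (F' := fun _ : Fin 4 => ℝ) k x
  simp [pd, this.fderiv]

lemma pd_neg_proj (j k : Fin 4) (x : Fin 4 → ℝ) :
    pd j (fun y => -(y k)) x = -((Pi.single j 1 : Fin 4 → ℝ) k) := by
  have : HasFDerivAt (fun y : Fin 4 → ℝ => -(y k))
      (-(ContinuousLinearMap.proj k : (Fin 4 → ℝ) →L[ℝ] ℝ)) x :=
    (hasFDerivAt_apply (𝕜 := ℝ) (F' := fun _ : Fin 4 => ℝ) k x).neg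
  simp [pd, this.fderiv]

lemma fderiv_decomp (f : (Fin 4 → ℝ) → ℝ) (x : Fin 4 → ℝ)
    (v : Fin 4 → ℝ) : fderiv ℝ f x v = ∑ i : Fin 4, v i * pd i f x := by
  have hv : v = ∑ i : Fin 4, v i • (Pi.single i 1 : Fin 4 → ℝ) := by
    funext k
    simp [Finset.sum_apply, Pi.single_apply, Finset.sum_ite_eq']
  conv_lhs => rw [hv]
  rw [map_sum]
  simp [pd, smul_eq_mul]

lemma const_along (f : (Fin 4 → ℝ) → ℝ) (hf : Differentiable ℝ f) (y d : Fin 4 → ℝ)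
    (h : ∀ z, fderiv ℝ f z d = 0) : f (y + d) = f y := by
  have hc : ∀ t : ℝ, HasDerivAt (fun t : ℝ => f (y + t • d)) 0 t := by
    intro t
    have hin : HasDerivAt (fun t : ℝ => y + t • d) d t := by
      simpa using ((hasDerivAt_id t).smul_const d).const_add y
    have := (hf (y + t • d)).hasFDerivAt.comp_hasDerivAt t hin
    simpa [h, Function.comp_def] using this
  have hconst : ∀ t : ℝ, (fun t : ℝ => f (y + t • d)) t = (fun t : ℝ => f (y + t • d)) 0 := by
    intro t
    exact is_const_of_deriv_eq_zero (fun s => (hc s).differentiableAt)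
      (fun s => (hc s).deriv) t 0
  simpa using hconst 1

lemma ode_solve (l : ℝ) (hl : l ≠ 0) (f g : ℝ → ℝ)
    (hf : ∀ s, HasDerivAt f (g s / l) s) (hg : ∀ s, HasDerivAt g (-f s / l) s) :
    ∀ s, f s = g 0 * sin (s / l) + f 0 * cos (s / l) ∧
      g s = g 0 * cos (s / l) - f 0 * sin (s / l) := by
  have hdiv : ∀ s : ℝ, HasDerivAt (fun t : ℝ => t / l) (1 / l) s := fun s => by
    simpa using (hasDerivAt_id s).div_const l
  have hcos : ∀ s : ℝ, HasDerivAt (fun t : ℝ => cos (t / l)) (-sin (s / l) * (1 / l)) s :=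
    fun s => by simpa [Function.comp_def] using (Real.hasDerivAt_cos (s / l)).comp s (hdiv s)
  have hsin : ∀ s : ℝ, HasDerivAt (fun t : ℝ => sin (t / l)) (cos (s / l) * (1 / l)) s :=
    fun s => by simpa [Function.comp_def] using (Real.hasDerivAt_sin (s / l)).comp s (hdiv s)
  have hu : ∀ s : ℝ, HasDerivAt (fun t => f t * cos (t / l) - g t * sin (t / l)) 0 s := by
    intro s
    have := ((hf s).mul (hcos s)).sub ((hg s).mul (hsin s))
    exact this.congr_deriv (by ring)
  have hv : ∀ s : ℝ, HasDerivAt (fun t => f t * sin (t / l) + g t * cos (t / l)) 0 s := by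
    intro s
    have := ((hf s).mul (hsin s)).add ((hg s).mul (hcos s))
    exact this.congr_deriv (by ring)
  have hu' : ∀ s : ℝ, f s * cos (s / l) - g s * sin (s / l) = f 0 := by
    intro s
    have := is_const_of_deriv_eq_zero (f := fun t => f t * cos (t / l) - g t * sin (t / l))
      (fun t => (hu t).differentiableAt) (fun t => (hu t).deriv) s 0
    simpa using this
  have hv' : ∀ s : ℝ, f s * sin (s / l) + g s * cos (s / l) = g 0 := by
    intro s
    have := is_const_of_deriv_eq_zero (f := fun t => f t * sin (t / l) + g t * cos (t / l))
      (fun t => (hv t).differentiableAt) (fun t => (hv t).deriv) s 0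
    simpa using this
  intro s
  have hsq := sin_sq_add_cos_sq (s / l)
  constructor
  · linear_combination cos (s / l) * hu' s + sin (s / l) * hv' s - f s * hsq
  · linear_combination cos (s / l) * hv' s - sin (s / l) * hu' s - g s * hsq

lemma hphi (l : ℝ) (x : Fin 4 → ℝ) :
    HasFDerivAt (fun y : Fin 4 → ℝ => (y 1 - y 3) / l)
      (l⁻¹ • ((ContinuousLinearMap.proj 1 : (Fin 4 → ℝ) →L[ℝ] ℝ)
        - (ContinuousLinearMap.proj 3 : (Fin 4 → ℝ) →L[ℝ] ℝ))) x := by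
  have h1 := hasFDerivAt_apply (𝕜 := ℝ) (F' := fun _ : Fin 4 => ℝ) 1 x
  have h3 := hasFDerivAt_apply (𝕜 := ℝ) (F' := fun _ : Fin 4 => ℝ) 3 x
  simpa [div_eq_mul_inv] using ((h1.sub h3).mul_const l⁻¹)

lemma pd_wave (l C1 C2 : ℝ) (j : Fin 4) (x : Fin 4 → ℝ) :
    pd j (fun y => C1 * sin ((y 1 - y 3) / l) + C2 * cos ((y 1 - y 3) / l)) x
      = (C1 * cos ((x 1 - x 3) / l) - C2 * sin ((x 1 - x 3) / l))
        * (((Pi.single j 1 : Fin 4 → ℝ) 1 - (Pi.single j 1 : Fin 4 → ℝ) 3) / l) := by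
  have hφ := hphi l x
  have hs := (Real.hasDerivAt_sin ((x 1 - x 3) / l)).comp_hasFDerivAt x hφ
  have hc := (Real.hasDerivAt_cos ((x 1 - x 3) / l)).comp_hasFDerivAt x hφ
  have htot' := (hs.const_mul C1).add (hc.const_mul C2)
  have htot : HasFDerivAt (fun y : Fin 4 → ℝ => C1 * sin ((y 1 - y 3) / l)
      + C2 * cos ((y 1 - y 3) / l))
      (C1 • cos ((x 1 - x 3) / l) • l⁻¹ • ((ContinuousLinearMap.proj 1 : (Fin 4 → ℝ) →L[ℝ] ℝ)
        - (ContinuousLinearMap.proj 3 : (Fin 4 → ℝ) →L[ℝ] ℝ))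
      + -(C2 • sin ((x 1 - x 3) / l) • l⁻¹ • ((ContinuousLinearMap.proj 1 : (Fin 4 → ℝ) →L[ℝ] ℝ)
        - (ContinuousLinearMap.proj 3 : (Fin 4 → ℝ) →L[ℝ] ℝ)))) x := by
    simpa [Function.comp_def, Pi.add_def] using htot'
  rw [pd, htot.fderiv]
  simp [smul_smul, div_eq_mul_inv]
  ring

lemma pd_wave' (l C1 C2 : ℝ) (j : Fin 4) (x : Fin 4 → ℝ) :
    pd j (fun y => C1 * cos ((y 1 - y 3) / l) - C2 * sin ((y 1 - y 3) / l)) x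
      = (-(C1 * sin ((x 1 - x 3) / l)) - C2 * cos ((x 1 - x 3) / l))
        * (((Pi.single j 1 : Fin 4 → ℝ) 1 - (Pi.single j 1 : Fin 4 → ℝ) 3) / l) := by
  have hφ := hphi l x
  have hs := (Real.hasDerivAt_sin ((x 1 - x 3) / l)).comp_hasFDerivAt x hφ
  have hc := (Real.hasDerivAt_cos ((x 1 - x 3) / l)).comp_hasFDerivAt x hφ
  have htot' := (hc.const_mul C1).sub (hs.const_mul C2)
  have htot : HasFDerivAt (fun y : Fin 4 → ℝ => C1 * cos ((y 1 - y 3) / l)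
      - C2 * sin ((y 1 - y 3) / l))
      (-(C1 • sin ((x 1 - x 3) / l) • l⁻¹ • ((ContinuousLinearMap.proj 1 : (Fin 4 → ℝ) →L[ℝ] ℝ)
        - (ContinuousLinearMap.proj 3 : (Fin 4 → ℝ) →L[ℝ] ℝ)))
      - C2 • cos ((x 1 - x 3) / l) • l⁻¹ • ((ContinuousLinearMap.proj 1 : (Fin 4 → ℝ) →L[ℝ] ℝ)
        - (ContinuousLinearMap.proj 3 : (Fin 4 → ℝ) →L[ℝ] ℝ))) x := by
    simpa [Function.comp_def, Pi.sub_def] using htot'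
  rw [pd, htot.fderiv]
  simp [smul_smul, div_eq_mul_inv]
  ring

/-- Class P_{4,4} for λ ≠ 0. -/
theorem class_P44_lambda_ne_zero (l : ℝ) (hl : l ≠ 0)
    (A : (Fin 4 → ℝ) → Fin 4 → ℝ) (hA : ContDiff ℝ 1 A) :
    (PInvariant e1 A ∧ PInvariant e3 A ∧
      PInvariant (fun _ => ![0, 1, 0, 1]) A ∧
      PInvariant (fun x => ![x 2, l, -x 0, 0]) A) ↔
      ∃ C1 C2 C3 C4 : ℝ,
        ∀ x, A x 0 = C1 * sin ((x 1 - x 3) / l) + C2 * cos ((x 1 - x 3) / l) ∧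
          A x 2 = C1 * cos ((x 1 - x 3) / l) - C2 * sin ((x 1 - x 3) / l) ∧
          A x 1 = C3 ∧ A x 3 = C4 := by
  constructor
  · rintro ⟨h1, h3, h24, h4⟩
    have hdA : ∀ i : Fin 4, Differentiable ℝ (fun y => A y i) := by
      intro i x
      exact (hasFDerivAt_apply (𝕜 := ℝ) (F' := fun _ : Fin 4 => ℝ) i
        (A x)).differentiableAt.comp x (hA.differentiable one_ne_zero x)
    have P0 : ∀ (i : Fin 4) (x : Fin 4 → ℝ), pd 0 (fun y => A y i) x = 0 := by
      intro i x
      have h0 := h1 x i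
      simp [lieCov, e1, Fin.sum_univ_four, pd_const] at h0
      exact h0
    have P2 : ∀ (i : Fin 4) (x : Fin 4 → ℝ), pd 2 (fun y => A y i) x = 0 := by
      intro i x
      have h0 := h3 x i
      simp [lieCov, e3, Fin.sum_univ_four, pd_const] at h0
      exact h0
    have P13 : ∀ (i : Fin 4) (x : Fin 4 → ℝ),
        pd 3 (fun y => A y i) x = - pd 1 (fun y => A y i) x := by
      intro i x
      have h0 := h24 x i
      simp [lieCov, Fin.sum_univ_four, pd_const] at h0
      linarith
    have Q : ∀ (i : Fin 4) (x : Fin 4 → ℝ),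
        l * pd 1 (fun y => A y i) x
          + A x 0 * (Pi.single i 1 : Fin 4 → ℝ) 2
          - A x 2 * (Pi.single i 1 : Fin 4 → ℝ) 0 = 0 := by
      intro i x
      have h0 := h4 x i
      simp [lieCov, Fin.sum_univ_four, pd_const, pd_proj, pd_neg_proj,
        P0, P2] at h0
      linarith
    have Q0 : ∀ x : Fin 4 → ℝ, pd 1 (fun y => A y 0) x = A x 2 / l := by
      intro x
      have := Q 0 x
      simp [Pi.single_apply] at this
      field_simp
      linarith
    have Q2 : ∀ x : Fin 4 → ℝ, pd 1 (fun y => A y 2) x = -A x 0 / l := by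
      intro x
      have := Q 2 x
      simp [Pi.single_apply] at this
      field_simp
      linarith
    have Q1 : ∀ x : Fin 4 → ℝ, pd 1 (fun y => A y 1) x = 0 := by
      intro x
      have := Q 1 x
      simp [Pi.single_apply] at this
      exact this.resolve_left hl
    have Q3 : ∀ x : Fin 4 → ℝ, pd 1 (fun y => A y 3) x = 0 := by
      intro x
      have := Q 3 x
      simp [Pi.single_apply] at this
      exact this.resolve_left hl
    -- A·1 and A·3 are constant
    have hconst : ∀ i : Fin 4, (∀ x, pd 1 (fun y => A y i) x = 0) →
        ∀ x : Fin 4 → ℝ, A x i = A 0 i := by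
      intro i hpd1 x
      have hz : ∀ z, fderiv ℝ (fun y => A y i) z = 0 := by
        intro z
        ext v
        rw [ContinuousLinearMap.zero_apply, fderiv_decomp _ z v,
          Fin.sum_univ_four]
        rw [P0, P2, P13, hpd1]
        ring
      exact is_const_of_fderiv_eq_zero (hdA i) hz x 0
    -- A·0 and A·2 depend only on x 1 - x 3
    have hdep : ∀ i : Fin 4, ∀ x : Fin 4 → ℝ,
        A x i = A (Pi.single 1 (x 1 - x 3)) i := by
      intro i x
      set y : Fin 4 → ℝ := Pi.single 1 (x 1 - x 3) with hy
      have hd : ∀ z, fderiv ℝ (fun w => A w i) z (x - y) = 0 := by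
        intro z
        rw [fderiv_decomp _ z (x - y), Fin.sum_univ_four]
        rw [P0, P2, P13]
        have e1' : (x - y) 1 = x 3 := by simp [hy, Pi.single_apply]
        have e3' : (x - y) 3 = x 3 := by simp [hy, Pi.single_apply]
        rw [e1', e3']
        ring
      have := const_along (fun w => A w i) (hdA i) y (x - y) hd
      simpa using this
    -- the ODE along the x1 axis
    set f : ℝ → ℝ := fun s => A (Pi.single 1 s) 0 with hfdef
    set g : ℝ → ℝ := fun s => A (Pi.single 1 s) 2 with hgdef
    have hsingle : ∀ s : ℝ, HasDerivAt (fun s : ℝ => (Pi.single 1 s : Fin 4 → ℝ))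
        (Pi.single 1 1) s := by
      intro s
      have hfun : (fun s : ℝ => (Pi.single 1 s : Fin 4 → ℝ))
          = fun s => s • (Pi.single 1 1 : Fin 4 → ℝ) := by
        funext s k
        simp [Pi.single_apply]
      rw [hfun]
      simpa using (hasDerivAt_id s).smul_const (Pi.single 1 1 : Fin 4 → ℝ)
    have hf : ∀ s, HasDerivAt f (g s / l) s := by
      intro s
      have := ((hdA 0) (Pi.single 1 s)).hasFDerivAt.comp_hasDerivAt s (hsingle s)
      have h' : HasDerivAt f (pd 1 (fun y => A y 0) (Pi.single 1 s)) s := this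
      rwa [Q0] at h'
    have hg : ∀ s, HasDerivAt g (-f s / l) s := by
      intro s
      have := ((hdA 2) (Pi.single 1 s)).hasFDerivAt.comp_hasDerivAt s (hsingle s)
      have h' : HasDerivAt g (pd 1 (fun y => A y 2) (Pi.single 1 s)) s := this
      rwa [Q2] at h'
    have hode := ode_solve l hl f g hf hg
    refine ⟨g 0, f 0, A 0 1, A 0 3, fun x => ?_⟩
    refine ⟨?_, ?_, hconst 1 Q1 x, hconst 3 Q3 x⟩
    · rw [hdep 0 x]
      exact (hode (x 1 - x 3)).1
    · rw [hdep 2 x]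
      exact (hode (x 1 - x 3)).2
  · rintro ⟨C1, C2, C3, C4, hC⟩
    have hA0 : (fun y => A y 0)
        = fun y => C1 * sin ((y 1 - y 3) / l) + C2 * cos ((y 1 - y 3) / l) :=
      funext fun y => (hC y).1
    have hA2 : (fun y => A y 2)
        = fun y => C1 * cos ((y 1 - y 3) / l) - C2 * sin ((y 1 - y 3) / l) :=
      funext fun y => (hC y).2.1
    have hA1 : (fun y => A y 1) = fun _ => C3 := funext fun y => (hC y).2.2.1
    have hA3 : (fun y => A y 3) = fun _ => C4 := funext fun y => (hC y).2.2.2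
    refine ⟨?_, ?_, ?_, ?_⟩ <;> intro x i <;>
      obtain ⟨hx0, hx2, hx1, hx3⟩ := hC x <;> fin_cases i <;>
      simp [lieCov, e1, e3, Fin.sum_univ_four, hA0, hA1, hA2, hA3, hx0, hx2, hx1, hx3,
        pd_wave, pd_wave', pd_const, pd_proj, pd_neg_proj, Pi.single_apply] <;>
      field_simp <;> ring
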